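/- Let f be a strictly increasing Allee map on [0,b] with threshold A_f and carrying capacity K_f, and let g be a strictly increasing Allee map on [0,b] with threshold A_g and carrying capacity K_g, where A_f < K_f < A_g < K_g. Then for every x₀ ∈ [0,b], μ({ω : the sequence n ↦ X n ω converges to 0}) = 1. -/

import Mathlib

/-!
Whatever the starting point in `[0, b]`, `N` steps of `f` land below `f^[N] b`, which is close
to `K_f < A_g`, and `M` further steps of `g` then push the whole interval below any given
`δ > 0`. Once the orbit is in `[0, δ)` with `δ ≤ A_f < A_g` it stays there, since both maps push
`(0, A_f)` down. Finally, for each of the countably many `δ = 1 / (k + 1)`, the coin pattern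
"`N` heads then `M` tails" almost surely occurs in some aligned block, by the second
Borel–Cantelli lemma applied to the independent block events.
-/

open MeasureTheory ProbabilityTheory Filter Set

/-- `f` is a strictly increasing Allee map on `[0, b]` with threshold `A` and
carrying capacity `K`. -/
def IsIncAlleeMap (b A K : ℝ) (f : ℝ → ℝ) : Prop :=
  0 < A ∧ A < K ∧ K < b ∧
  MapsTo f (Icc 0 b) (Icc 0 b) ∧
  ContinuousOn f (Icc 0 b) ∧
  StrictMonoOn f (Icc 0 b) ∧
  f 0 = 0 ∧ f A = A ∧ f K = K ∧
  (∀ x ∈ Ioo 0 A ∪ Ioc K b, f x < x) ∧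
  (∀ x ∈ Ioo A K, x < f x)

/-- The random orbit driven by a sequence of coin flips: apply `f` when the coin shows
`true` and `g` when it shows `false`. -/
def randOrbit (f g : ℝ → ℝ) (x₀ : ℝ) : ℕ → (ℕ → Bool) → ℝ
  | 0, _ => x₀
  | n + 1, ω => if ω n then f (randOrbit f g x₀ n ω) else g (randOrbit f g x₀ n ω)

open scoped ENNReal Topology

theorem MonotoneOn.iterate_of_mapsTo {α : Type*} [Preorder α] {h : α → α} {s : Set α}
    (hmono : MonotoneOn h s) (hmaps : MapsTo h s s) (n : ℕ) : MonotoneOn h^[n] s := by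
  induction n with
  | zero => exact monotoneOn_id
  | succ n ih =>
    intro x hx y hy hxy
    rw [Function.iterate_succ_apply', Function.iterate_succ_apply']
    exact hmono (hmaps.iterate n hx) (hmaps.iterate n hy) (ih hx hy hxy)

theorem tendsto_iterate_of_lt_self {α : Type*} [ConditionallyCompleteLinearOrder α]
    [TopologicalSpace α] [OrderTopology α] {h : α → α} {c d : α} (hcd : c ≤ d) (hc : h c = c)
    (hmono : MonotoneOn h (Icc c d)) (hcont : ContinuousOn h (Icc c d))
    (hlt : ∀ x ∈ Ioc c d, h x < x) :
    Tendsto (fun n => h^[n] d) atTop (𝓝 c) := by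
  have hle : ∀ x ∈ Icc c d, h x ≤ x := fun x hx =>
    hx.1.eq_or_lt.elim (fun hcx => hcx ▸ hc.le) fun hcx => (hlt x ⟨hcx, hx.2⟩).le
  have hmaps : MapsTo h (Icc c d) (Icc c d) := fun x hx =>
    ⟨hc ▸ hmono ⟨le_rfl, hcd⟩ hx hx.1, (hle x hx).trans hx.2⟩
  set a : ℕ → α := fun n => h^[n] d
  have ha_mem : ∀ n, a n ∈ Icc c d := fun n => hmaps.iterate n ⟨hcd, le_rfl⟩
  have ha_succ : ∀ n, a (n + 1) = h (a n) := fun n => Function.iterate_succ_apply' h n d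
  have ha_anti : Antitone a :=
    antitone_nat_of_succ_le fun n => (ha_succ n).symm ▸ hle _ (ha_mem n)
  have ha_bdd : BddBelow (range a) := ⟨c, by rintro _ ⟨n, rfl⟩; exact (ha_mem n).1⟩
  have ha_lim : Tendsto a atTop (𝓝 (⨅ n, a n)) := tendsto_atTop_ciInf ha_anti ha_bdd
  set L := ⨅ n, a n
  have hL_mem : L ∈ Icc c d := isClosed_Icc.mem_of_tendsto ha_lim (.of_forall ha_mem)
  have hL_fixed : h L = L := by
    refine tendsto_nhds_unique ?_ ((tendsto_add_atTop_iff_nat 1).2 ha_lim)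
    simp_rw [ha_succ]
    exact (hcont L hL_mem).tendsto.comp (tendsto_nhdsWithin_iff.2 ⟨ha_lim, .of_forall ha_mem⟩)
  obtain hcL | hcL := hL_mem.1.eq_or_lt
  · rwa [← hcL] at ha_lim
  · exact absurd hL_fixed (hlt L ⟨hcL, hL_mem.2⟩).ne

namespace IsIncAlleeMap

variable {b A K : ℝ} {f : ℝ → ℝ}

theorem mapsTo (hf : IsIncAlleeMap b A K f) : MapsTo f (Icc 0 b) (Icc 0 b) := hf.2.2.2.1

theorem right_mem_Icc (hf : IsIncAlleeMap b A K f) : b ∈ Icc 0 b :=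
  ⟨(hf.1.trans (hf.2.1.trans hf.2.2.1)).le, le_rfl⟩

theorem tendsto_iterate_right_endpoint (hf : IsIncAlleeMap b A K f) :
    Tendsto (fun n => f^[n] b) atTop (𝓝 K) := by
  obtain ⟨hA, hAK, hKb, -, hcont, hmono, -, -, hfK, hlt, -⟩ := hf
  have hsub : Icc K b ⊆ Icc 0 b := Icc_subset_Icc_left (hA.trans hAK).le
  exact tendsto_iterate_of_lt_self hKb.le hfK (hmono.monotoneOn.mono hsub) (hcont.mono hsub)
    fun x hx => hlt x (Or.inr hx)

theorem tendsto_iterate_zero (hf : IsIncAlleeMap b A K f) {y : ℝ} (hy : y ∈ Ico 0 A) :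
    Tendsto (fun n => f^[n] y) atTop (𝓝 0) := by
  obtain ⟨-, hAK, hKb, -, hcont, hmono, hf0, -, -, hlt, -⟩ := hf
  have hsub : Icc 0 y ⊆ Icc 0 b := Icc_subset_Icc_right (hy.2.trans (hAK.trans hKb)).le
  exact tendsto_iterate_of_lt_self hy.1 hf0 (hmono.monotoneOn.mono hsub) (hcont.mono hsub)
    fun x hx => hlt x (Or.inl ⟨hx.1, hx.2.trans_lt hy.2⟩)

theorem mapsTo_Ico (hf : IsIncAlleeMap b A K f) {δ : ℝ} (hδ : δ ≤ A) :
    MapsTo f (Ico 0 δ) (Ico 0 δ) := by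
  obtain ⟨-, hAK, hKb, hmaps, -, -, hf0, -, -, hlt, -⟩ := hf
  intro x hx
  have hxI : x ∈ Icc 0 b := ⟨hx.1, (hx.2.trans_le hδ |>.trans (hAK.trans hKb)).le⟩
  obtain hx0 | hx0 := hx.1.eq_or_lt
  · rw [← hx0, hf0]; exact ⟨le_rfl, hx0 ▸ hx.2⟩
  · exact ⟨(hmaps hxI).1, (hlt x (Or.inl ⟨hx0, hx.2.trans_le hδ⟩)).trans hx.2⟩

theorem iterate_le_iterate (hf : IsIncAlleeMap b A K f) (n : ℕ) {x y : ℝ} (hx : x ∈ Icc 0 b)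
    (hy : y ∈ Icc 0 b) (hxy : x ≤ y) : f^[n] x ≤ f^[n] y :=
  hf.2.2.2.2.2.1.monotoneOn.iterate_of_mapsTo hf.mapsTo n hx hy hxy

end IsIncAlleeMap

theorem exists_iterate_comp_iterate_lt {b Af Kf Ag Kg : ℝ} {f g : ℝ → ℝ}
    (hf : IsIncAlleeMap b Af Kf f) (hg : IsIncAlleeMap b Ag Kg g) (hKA : Kf < Ag) {δ : ℝ}
    (hδ : 0 < δ) : ∃ N M : ℕ, ∀ x ∈ Icc 0 b, g^[M] (f^[N] x) < δ := by
  have hb := hf.right_mem_Icc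
  obtain ⟨N, hN⟩ := (hf.tendsto_iterate_right_endpoint.eventually_lt_const hKA).exists
  have hfNb : f^[N] b ∈ Icc 0 b := hf.mapsTo.iterate N hb
  obtain ⟨M, hM⟩ :=
    ((hg.tendsto_iterate_zero ⟨hfNb.1, hN⟩).eventually_lt_const hδ).exists
  refine ⟨N, M, fun x hx => lt_of_le_of_lt ?_ hM⟩
  exact hg.iterate_le_iterate M (hf.mapsTo.iterate N hx) hfNb (hf.iterate_le_iterate N hx hb hx.2)

section RandOrbit

variable {f g : ℝ → ℝ}

theorem randOrbit_add (x₀ : ℝ) (m n : ℕ) (ω : ℕ → Bool) :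
    randOrbit f g x₀ (m + n) ω = randOrbit f g (randOrbit f g x₀ m ω) n (fun i => ω (m + i)) := by
  induction n with
  | zero => rfl
  | succ n ih => rw [← add_assoc, randOrbit, randOrbit, ih]

theorem randOrbit_mem {s : Set ℝ} (hf : MapsTo f s s) (hg : MapsTo g s s) {x₀ : ℝ} (hx₀ : x₀ ∈ s)
    (n : ℕ) (ω : ℕ → Bool) : randOrbit f g x₀ n ω ∈ s := by
  induction n with
  | zero => exact hx₀
  | succ n ih =>
    simp only [randOrbit]
    split
    exacts [hf ih, hg ih]

theorem randOrbit_of_forall_eq (x₀ : ℝ) {n : ℕ} {ω : ℕ → Bool} {c : Bool}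
    (hω : ∀ i < n, ω i = c) : randOrbit f g x₀ n ω = (if c then f else g)^[n] x₀ := by
  induction n with
  | zero => rfl
  | succ n ih =>
    rw [randOrbit, hω n n.lt_succ_self, ih fun i hi => hω i (hi.trans n.lt_succ_self),
      Function.iterate_succ_apply']
    cases c <;> rfl

theorem randOrbit_add_of_block (x₀ : ℝ) {m N M : ℕ} {ω : ℕ → Bool}
    (hω : ∀ i < N + M, ω (m + i) = decide (i < N)) :
    randOrbit f g x₀ (m + (N + M)) ω = g^[M] (f^[N] (randOrbit f g x₀ m ω)) := by
  have hf : randOrbit f g x₀ (m + N) ω = f^[N] (randOrbit f g x₀ m ω) := by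
    rw [randOrbit_add, randOrbit_of_forall_eq (c := true) _ fun i hi => ?_]
    · rfl
    · simpa [hi] using hω i (by omega)
  rw [← add_assoc, randOrbit_add, hf, randOrbit_of_forall_eq (c := false) _ fun i hi => ?_]
  · rfl
  · simpa [add_assoc] using hω (N + i) (by omega)

end RandOrbit

section Coins

variable {Ω : Type*} [MeasurableSpace Ω] {μ : Measure Ω}

theorem ProbabilityTheory.iIndepFun.iIndepSet_biInter_preimage {ι κ β : Type*} [MeasurableSpace β]
    {X : ι → Ω → β} (hXm : ∀ i, Measurable (X i)) (hX : iIndepFun X μ) {A : ι → Set β}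
    (hA : ∀ i, MeasurableSet (A i)) {B : κ → Finset ι} (hB : Pairwise (Function.onFun Disjoint B)) :
    iIndepSet (fun k => ⋂ i ∈ B k, X i ⁻¹' A i) μ := by
  classical
  rw [iIndepSet_iff_meas_biInter fun k => Finset.measurableSet_biInter _ fun i _ => hXm i (hA i)]
  intro S
  rw [← Finset.set_biInter_biUnion, hX.measure_inter_preimage_eq_mul _ fun i _ => hA i,
    Finset.prod_biUnion (hB.set_pairwise _)]
  exact Finset.prod_congr rfl fun k _ =>
    (hX.measure_inter_preimage_eq_mul _ fun i _ => hA i).symm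

variable [IsProbabilityMeasure μ] {X : ℕ → Ω → Bool} {p : ℝ}

theorem measure_preimage_singleton_coin (hXm : ∀ n, Measurable (X n))
    (hcoin : ∀ n, μ {ω | X n ω = true} = ENNReal.ofReal p) (n : ℕ) (v : Bool) :
    μ (X n ⁻¹' {v}) = μ (X 0 ⁻¹' {v}) := by
  have htrue : ∀ n, μ (X n ⁻¹' {true}) = ENNReal.ofReal p := hcoin
  cases v with
  | true => rw [htrue, htrue]
  | false =>
    have hfalse : ∀ n, X n ⁻¹' {false} = (X n ⁻¹' {true})ᶜ := fun n => by ext; simp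
    rw [hfalse, hfalse, prob_compl_eq_one_sub (hXm n (measurableSet_singleton _)),
      prob_compl_eq_one_sub (hXm 0 (measurableSet_singleton _)), htrue, htrue]

theorem measure_preimage_singleton_coin_ne_zero (hXm : ∀ n, Measurable (X n))
    (hp : p ∈ Ioo 0 1) (hcoin : ∀ n, μ {ω | X n ω = true} = ENNReal.ofReal p) (v : Bool) :
    μ (X 0 ⁻¹' {v}) ≠ 0 := by
  have htrue : μ (X 0 ⁻¹' {true}) = ENNReal.ofReal p := hcoin 0
  cases v with
  | true => rw [htrue]; exact (ENNReal.ofReal_pos.2 hp.1).ne'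
  | false =>
    have hfalse : X 0 ⁻¹' {false} = (X 0 ⁻¹' {true})ᶜ := by ext; simp
    rw [hfalse, prob_compl_eq_one_sub (hXm 0 (measurableSet_singleton _)), htrue]
    exact (tsub_pos_of_lt (ENNReal.ofReal_lt_one.2 hp.2)).ne'

theorem ae_frequently_block_eq (hXm : ∀ n, Measurable (X n)) (hX : iIndepFun X μ)
    (hp : p ∈ Ioo 0 1) (hcoin : ∀ n, μ {ω | X n ω = true} = ENNReal.ofReal p)
    (L : ℕ) (s : ℕ → Bool) :
    ∀ᵐ ω ∂μ, ∃ᶠ m in atTop, ∀ i < L, X (m * L + i) ω = s i := by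
  set E : ℕ → Set Ω := fun m => ⋂ n ∈ Finset.Ico (m * L) (m * L + L), X n ⁻¹' {s (n % L)}
  have hE_mem : ∀ m ω, ω ∈ E m ↔ ∀ i < L, X (m * L + i) ω = s i := by
    intro m ω
    simp only [E, mem_iInter₂, Finset.mem_Ico, mem_preimage, mem_singleton_iff]
    constructor
    · intro h i hi
      simpa [Nat.mul_add_mod_of_lt hi] using h (m * L + i) ⟨by omega, by omega⟩
    · intro h n hn
      obtain ⟨i, rfl⟩ := Nat.exists_eq_add_of_le hn.1
      simpa [Nat.mul_add_mod_of_lt (show i < L by omega)] using h i (by omega)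
  have hE_meas : ∀ m, MeasurableSet (E m) := fun m =>
    Finset.measurableSet_biInter _ fun n _ => hXm n (measurableSet_singleton _)
  have hE_indep : iIndepSet E μ := by
    refine hX.iIndepSet_biInter_preimage hXm (fun _ => measurableSet_singleton _) ?_
    intro m m' hmm'
    refine Finset.disjoint_left.2 fun n hn hn' => ?_
    simp only [Finset.mem_Ico] at hn hn'
    rcases hmm'.lt_or_gt with h | h <;> nlinarith
  have hE_measure : ∀ m, μ (E m) = ∏ i ∈ Finset.range L, μ (X 0 ⁻¹' {s i}) := by
    intro m
    rw [hX.measure_inter_preimage_eq_mul _ fun _ _ => measurableSet_singleton _,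
      Finset.prod_Ico_eq_prod_range, add_tsub_cancel_left]
    refine Finset.prod_congr rfl fun i hi => ?_
    rw [measure_preimage_singleton_coin hXm hcoin,
      Nat.mul_add_mod_of_lt (Finset.mem_range.1 hi)]
  have hE_sum : ∑' m, μ (E m) = ∞ := by
    simp_rw [hE_measure]
    exact ENNReal.tsum_const_eq_top_of_ne_zero (Finset.prod_ne_zero_iff.2 fun i _ =>
      measure_preimage_singleton_coin_ne_zero hXm hp hcoin (s i))
  have h_limsup : limsup E atTop ∈ ae μ :=
    mem_ae_iff.2 <| (prob_compl_eq_zero_iff (MeasurableSet.measurableSet_limsup hE_meas)).2 <|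
      measure_limsup_eq_one hE_meas hE_indep hE_sum
  filter_upwards [h_limsup] with ω hω
  exact (mem_limsup_iff_frequently_mem.1 hω).mono fun m hm => (hE_mem m ω).1 hm

end Coins

theorem tendsto_randOrbit_zero_of_forall_block {b Af Kf Ag Kg : ℝ} {f g : ℝ → ℝ}
    (hf : IsIncAlleeMap b Af Kf f) (hg : IsIncAlleeMap b Ag Kg g) (hAA : Af ≤ Ag) {x₀ : ℝ}
    (hx₀ : x₀ ∈ Icc 0 b) {ω : ℕ → Bool}
    (hω : ∀ δ > 0, ∃ m N M : ℕ, (∀ x ∈ Icc 0 b, g^[M] (f^[N] x) < δ) ∧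
      ∀ i < N + M, ω (m + i) = decide (i < N)) :
    Tendsto (fun n => randOrbit f g x₀ n ω) atTop (𝓝 0) := by
  refine tendsto_order.2 ⟨fun a ha => .of_forall fun n => ha.trans_le
    (randOrbit_mem hf.mapsTo hg.mapsTo hx₀ n ω).1, fun ε hε => ?_⟩
  set δ := min ε Af
  obtain ⟨m, N, M, hNM, hblock⟩ := hω δ (lt_min hε hf.1)
  have h_entry : randOrbit f g x₀ (m + (N + M)) ω ∈ Ico 0 δ := by
    have hm := randOrbit_mem hf.mapsTo hg.mapsTo hx₀ m ω
    rw [randOrbit_add_of_block x₀ hblock]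
    exact ⟨(hg.mapsTo.iterate M (hf.mapsTo.iterate N hm)).1, hNM _ hm⟩
  refine eventually_atTop.2 ⟨m + (N + M), fun n hn => ?_⟩
  obtain ⟨j, rfl⟩ := Nat.exists_eq_add_of_le hn
  rw [randOrbit_add]
  exact ((randOrbit_mem (hf.mapsTo_Ico (min_le_right _ _))
    (hg.mapsTo_Ico ((min_le_right _ _).trans hAA)) h_entry j _).2).trans_le (min_le_left _ _)

theorem stmt12_general
    (b Af Kf Ag Kg : ℝ)
    (f g : ℝ → ℝ)
    (hf : IsIncAlleeMap b Af Kf f) (hg : IsIncAlleeMap b Ag Kg g)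
    (horder : Af < Kf ∧ Kf < Ag ∧ Ag < Kg)
    (p : ℝ) (hp : p ∈ Ioo (0 : ℝ) 1)
    (μ : Measure (ℕ → Bool)) [IsProbabilityMeasure μ]
    (hindep : iIndepFun (fun n ω => ω n) μ)
    (hcoin : ∀ n, μ {ω | ω n = true} = ENNReal.ofReal p) :
    ∀ x₀ ∈ Icc (0 : ℝ) b,
      μ {ω | Tendsto (fun n => randOrbit f g x₀ n ω) atTop (nhds 0)} = 1 := by
  intro x₀ hx₀
  choose N M hNM using fun k : ℕ =>
    exists_iterate_comp_iterate_lt hf hg horder.2.1 (Nat.one_div_pos_of_nat (n := k))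
  have h_blocks : ∀ᵐ ω ∂μ, ∀ k, ∃ m, ∀ i < N k + M k,
      ω (m * (N k + M k) + i) = decide (i < N k) :=
    ae_all_iff.2 fun k => (ae_frequently_block_eq measurable_pi_apply hindep hp hcoin _ _).mono
      fun ω hω => hω.exists
  have h_tendsto : ∀ᵐ ω ∂μ, Tendsto (fun n => randOrbit f g x₀ n ω) atTop (𝓝 0) := by
    filter_upwards [h_blocks] with ω hω
    refine tendsto_randOrbit_zero_of_forall_block hf hg (horder.1.trans horder.2.1).le hx₀
      fun δ hδ => ?_
    obtain ⟨k, hk⟩ := exists_nat_one_div_lt hδ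
    obtain ⟨m, hm⟩ := hω k
    exact ⟨_, N k, M k, fun x hx => (hNM k x hx).trans hk, hm⟩
  rw [measure_congr (ae_eq_univ.2 (mem_ae_iff.1 h_tendsto)), measure_univ]

theorem stmt12
    (b Af Kf Ag Kg : ℝ) (hb : 0 < b)
    (f g : ℝ → ℝ)
    (hf : IsIncAlleeMap b Af Kf f) (hg : IsIncAlleeMap b Ag Kg g)
    (horder : Af < Kf ∧ Kf < Ag ∧ Ag < Kg)
    (p : ℝ) (hp : p ∈ Ioo (0 : ℝ) 1)
    (μ : Measure (ℕ → Bool)) [IsProbabilityMeasure μ]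
    (hindep : iIndepFun (fun n ω => ω n) μ)
    (hcoin : ∀ n, μ {ω | ω n = true} = ENNReal.ofReal p) :
    ∀ x₀ ∈ Icc (0 : ℝ) b,
      μ {ω | Tendsto (fun n => randOrbit f g x₀ n ω) atTop (nhds 0)} = 1 :=
  stmt12_general b Af Kf Ag Kg f g hf hg horder p hp μ hindep hcoin
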